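/- For a complete multipartite graph K_{p_1,...,p_k} with k ≥ 2 parts which is not a star K_{1,p} with p ≥ 2, the minimum MEG-set is the entire vertex set, i.e., MEG(K_{p_1,...,p_k}) = p_1 + ... + p_k. For the star K_{1,p}, MEG(K_{1,p}) = p. -/

import Mathlib

open SimpleGraph

/-- Two vertices `x` and `y` monitor an edge `e` in `G`: there is a shortest path between
them, and `e` lies on every shortest path between `x` and `y`. -/
def Monitors {V : Type*} (G : SimpleGraph V) (x y : V) (e : Sym2 V) : Prop :=
  (∃ p : G.Walk x y, p.IsPath ∧ p.length = G.dist x y) ∧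
    ∀ p : G.Walk x y, p.IsPath → p.length = G.dist x y → e ∈ p.edges

/-- `S` is a monitoring edge-geodetic set of `G`. -/
def IsMEGSet {V : Type*} (G : SimpleGraph V) (S : Set V) : Prop :=
  ∀ e ∈ G.edgeSet, ∃ x ∈ S, ∃ y ∈ S, Monitors G x y e

/-- The minimum size of a monitoring edge-geodetic set of `G`. -/
noncomputable def megNum {V : Type*} (G : SimpleGraph V) : ℕ :=
  sInf {n | ∃ S : Set V, IsMEGSet G S ∧ S.ncard = n}

/-- The set of leaves (degree-1 vertices) of `G`. -/
def leaves {V : Type*} (G : SimpleGraph V) : Set V :=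
  {v | (G.neighborSet v).ncard = 1}

/-! In a complete multipartite graph two distinct vertices are either adjacent (different parts)
or at distance two (same part), and then every vertex of the other parts is a middle vertex of a
shortest path between them. So an adjacent pair monitors only its own edge, and a pair at distance
two monitors an edge only if it has a unique common neighbour. Unless the graph is a star, every
same-part pair has two common neighbours, so an edge `uv` is monitored only by the pair `u, v`
itself, and every vertex is forced. In the star `K_{1,p}` the leaves are forced in the same way,
and any two leaves monitor both edges through the centre. -/

namespace SimpleGraph.Walk

variable {V : Type*} {G : SimpleGraph V} {x y : V}

lemma edges_eq_of_length_eq_one (q : G.Walk x y) (h : q.length = 1) : q.edges = [s(x, y)] := by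
  cases q with
  | nil => simp at h
  | cons _ q' => cases q' with
    | nil => simp
    | cons _ _ => simp at h

lemma exists_edges_eq_of_length_eq_two (q : G.Walk x y) (h : q.length = 2) :
    ∃ c, G.Adj x c ∧ G.Adj c y ∧ q.edges = [s(x, c), s(c, y)] := by
  cases q with
  | nil => simp at h
  | cons hxc q' => cases q' with
    | nil => simp at h
    | cons hcy q'' => cases q'' with
      | nil => exact ⟨_, hxc, hcy, by simp⟩
      | cons _ _ => simp at h

end SimpleGraph.Walk

section Monitoring

variable {V : Type*} {G : SimpleGraph V} {x y u v c : V} {e : Sym2 V}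

lemma Monitors.reachable (h : Monitors G x y e) : G.Reachable x y :=
  let ⟨q, _⟩ := h.1; ⟨q⟩

lemma Monitors.ne (h : Monitors G x y e) : x ≠ y := by
  rintro rfl
  simpa using h.2 Walk.nil (by simp) (by simp)

lemma Monitors.eq_of_adj (h : Monitors G x y e) (hxy : G.Adj x y) : e = s(x, y) := by
  have hd : G.dist x y = 1 := dist_eq_one_iff_adj.mpr hxy
  simpa using h.2 hxy.toWalk (by simp [hxy.ne]) (by simp [hd])

lemma Monitors.eq_or_eq_of_dist_eq_two (h : Monitors G x y e) (hd : G.dist x y = 2)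
    (hxc : G.Adj x c) (hcy : G.Adj c y) : e = s(x, c) ∨ e = s(c, y) := by
  simpa using h.2 (.cons hxc (.cons hcy .nil))
    (by simp [Walk.isPath_def, hxc.ne, hcy.ne, h.ne]) (by simp [hd])

lemma monitors_of_adj (h : G.Adj x y) : Monitors G x y s(x, y) := by
  refine ⟨h.reachable.exists_path_of_dist, fun q _ hq => ?_⟩
  rw [q.edges_eq_of_length_eq_one (hq.trans (dist_eq_one_iff_adj.mpr h))]
  exact List.mem_singleton_self _

lemma monitors_of_dist_eq_two (hd : G.dist x y = 2)
    (hc : ∀ c', G.Adj x c' → G.Adj c' y → c' = c) : Monitors G x y s(x, c) := by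
  refine ⟨(Reachable.of_dist_ne_zero (by omega)).exists_path_of_dist, fun q _ hq => ?_⟩
  obtain ⟨c', hxc', hc'y, hedges⟩ := q.exists_edges_eq_of_length_eq_two (hq.trans hd)
  rw [hedges, ← hc c' hxc' hc'y]
  exact List.mem_cons_self

lemma isMEGSet_univ (G : SimpleGraph V) : IsMEGSet G Set.univ := by
  rintro ⟨u, v⟩ huv
  exact ⟨u, trivial, v, trivial, monitors_of_adj huv⟩

-- A pair monitoring an edge at `u` has every shortest path through that edge, in particular the
-- one through a middle vertex `c ≠ u`; so `u` is one of the pair.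
lemma IsMEGSet.mem_of_adj {S : Set V} (hS : IsMEGSet G S) (huv : G.Adj u v)
    (hdiam : ∀ x y, G.dist x y ≤ 2)
    (hmid : ∀ x y, G.dist x y = 2 → ∃ c ≠ u, G.Adj x c ∧ G.Adj c y) : u ∈ S := by
  obtain ⟨x, hx, y, hy, hm⟩ := hS s(u, v) huv
  suffices u = x ∨ u = y by rcases this with rfl | rfl <;> assumption
  have hu : u ∈ s(u, v) := Sym2.mem_mk_left u v
  have hpos := hm.reachable.pos_dist_of_ne hm.ne
  obtain hd | hd : G.dist x y = 1 ∨ G.dist x y = 2 := by have := hdiam x y; omega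
  · rwa [hm.eq_of_adj (dist_eq_one_iff_adj.mp hd), Sym2.mem_iff] at hu
  · obtain ⟨c, hcu, hxc, hcy⟩ := hmid x y hd
    rcases hm.eq_or_eq_of_dist_eq_two hd hxc hcy with he | he <;>
      rw [he, Sym2.mem_iff] at hu <;> grind

lemma megNum_eq_ncard [Finite V] {S : Set V} (hS : IsMEGSet G S)
    (hmin : ∀ T, IsMEGSet G T → S ⊆ T) : megNum G = S.ncard :=
  le_antisymm (Nat.sInf_le ⟨S, hS, rfl⟩) <| le_csInf ⟨_, S, hS, rfl⟩ <| by
    rintro _ ⟨T, hT, rfl⟩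
    exact Set.ncard_le_ncard (hmin T hT)

end Monitoring

namespace completeMultipartiteGraph

variable {ι : Type*} {V : ι → Type*}

local notation "K" => completeMultipartiteGraph V

lemma eq_of_fst_eq_of_subsingleton {i : ι} [Subsingleton (V i)] {x y : Σ i, V i} (hx : x.1 = i)
    (hy : y.1 = i) : x = y := by
  obtain ⟨_, a⟩ := x
  obtain ⟨_, b⟩ := y
  subst hx hy
  rw [Subsingleton.elim a b]

lemma ncard_fiber (j : ι) : {v : Σ i, V i | v.1 = j}.ncard = Nat.card (V j) := by
  change (Sigma.fst ⁻¹' {j}).ncard = _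
  rw [← Set.range_sigmaMk, Set.ncard_range_of_injective sigma_mk_injective]

lemma exists_fst_ne_of_nonempty {i j : ι} (hij : i ≠ j) [Nonempty (V i)] [Nonempty (V j)]
    (m : ι) : ∃ c : Σ i, V i, c.1 ≠ m := by
  by_cases hm : m = i
  · exact ⟨⟨j, Classical.arbitrary _⟩, hm ▸ hij.symm⟩
  · exact ⟨⟨i, Classical.arbitrary _⟩, Ne.symm hm⟩

lemma dist_eq_two {x y : Σ i, V i} (c : Σ i, V i) (hc : c.1 ≠ x.1) (hxy : x.1 = y.1)
    (hne : x ≠ y) : (K).dist x y = 2 := by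
  let q : (K).Walk x y := .cons (by simpa using hc.symm) (.cons (by simpa [← hxy] using hc) .nil)
  have h1 : (K).dist x y ≠ 1 := fun h => by simpa [hxy] using dist_eq_one_iff_adj.mp h
  have := Reachable.pos_dist_of_ne ⟨q⟩ hne
  have := dist_le q
  simp only [q, Walk.length_cons, Walk.length_nil] at this
  omega

lemma dist_le_two (hV : ∀ i, ∃ c : Σ i, V i, c.1 ≠ i) (x y : Σ i, V i) :
    (K).dist x y ≤ 2 := by
  by_cases hne : x = y
  · simp [hne]
  by_cases hxy : x.1 = y.1
  · obtain ⟨c, hc⟩ := hV x.1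
    exact (dist_eq_two c hc hxy hne).le
  · exact (dist_eq_one_iff_adj.mpr (by simpa using hxy)).le.trans (by norm_num)

lemma fst_eq_of_dist_eq_two {x y : Σ i, V i} (h : (K).dist x y = 2) : x.1 = y.1 := by
  by_contra hxy
  have : (K).dist x y = 1 := dist_eq_one_iff_adj.mpr (by simpa using hxy)
  omega

lemma mem_of_isMEGSet (hV : ∀ i, ∃ c : Σ i, V i, c.1 ≠ i) {S : Set (Σ i, V i)}
    (hS : IsMEGSet K S) {u : Σ i, V i}
    (hu : ∀ x y : Σ i, V i, x.1 = y.1 → x ≠ y → ∃ c ≠ u, c.1 ≠ x.1) : u ∈ S := by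
  obtain ⟨v, hv⟩ := hV u.1
  refine hS.mem_of_adj (v := v) (by simpa using hv.symm) (dist_le_two hV) fun x y hd => ?_
  have hxy := fst_eq_of_dist_eq_two hd
  obtain ⟨c, hcu, hc⟩ := hu x y hxy (by rintro rfl; simp at hd)
  exact ⟨c, hcu, by simpa using hc.symm, by simpa [← hxy] using hc⟩

lemma isMEGSet_fiber_of_two_parts {i j : ι} (hij : i ≠ j) (hparts : ∀ m, m = i ∨ m = j)
    [Subsingleton (V i)] [Nontrivial (V j)] :
    IsMEGSet K {v | v.1 = j} := by
  have key : ∀ a b : Σ i, V i, a.1 = i → b.1 = j →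
      ∃ x ∈ {v : Σ i, V i | v.1 = j}, ∃ y ∈ {v : Σ i, V i | v.1 = j},
        Monitors K x y s(b, a) := by
    rintro a ⟨_, b⟩ ha rfl
    obtain ⟨d, hd⟩ := exists_ne b
    refine ⟨⟨_, b⟩, rfl, ⟨_, d⟩, rfl, monitors_of_dist_eq_two
      (dist_eq_two a (by simpa [ha] using hij) rfl (by simpa using hd.symm)) fun c hbc _ => ?_⟩
    exact eq_of_fst_eq_of_subsingleton
      ((hparts c.1).resolve_right (by simpa [eq_comm] using hbc)) ha
  refine Sym2.ind fun u v huv => ?_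
  simp only [mem_edgeSet, comap_adj, top_adj] at huv
  rcases hparts u.1 with hu | hu
  · rw [Sym2.eq_swap]
    exact key u v hu ((hparts v.1).resolve_left (hu ▸ huv).symm)
  · exact key v u ((hparts v.1).resolve_right (hu ▸ huv).symm) hu

lemma fiber_subset_of_isMEGSet {i j : ι} (hij : i ≠ j) [Subsingleton (V i)] [Nonempty (V i)]
    [Nonempty (V j)] {S : Set (Σ i, V i)} (hS : IsMEGSet K S) : {v | v.1 = j} ⊆ S := by
  intro u hu
  let c : Σ i, V i := ⟨i, Classical.arbitrary _⟩
  refine mem_of_isMEGSet (exists_fst_ne_of_nonempty hij) hS fun x y hxy hne => ⟨c, ?_, ?_⟩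
  · rintro rfl
    exact hij hu
  · exact fun h => hne (eq_of_fst_eq_of_subsingleton h.symm (hxy ▸ h.symm))

section FinParts

variable {k : ℕ} {p : Fin k → ℕ}

lemma exists_fst_ne (hk : 2 ≤ k) (hp : ∀ i, 1 ≤ p i) (i : Fin k) :
    ∃ c : Σ i, Fin (p i), c.1 ≠ i := by
  obtain ⟨j, hj⟩ := Fintype.exists_ne_of_one_lt_card (by rw [Fintype.card_fin]; omega) i
  exact ⟨⟨j, ⟨0, hp j⟩⟩, hj⟩

lemma two_le_of_fst_eq {x y : Σ i, Fin (p i)} (hxy : x.1 = y.1) (hne : x ≠ y) : 2 ≤ p x.1 := by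
  obtain ⟨i, a⟩ := x
  obtain ⟨_, b⟩ := y
  obtain rfl : i = _ := hxy
  exact Fin.nontrivial_iff_two_le.mp ⟨a, b, by simpa using hne⟩

lemma exists_pair_fst_ne_of_not_star (hk : 2 ≤ k) (hp : ∀ i, 1 ≤ p i)
    (hns : ¬(k = 2 ∧ ∃ i j : Fin k, i ≠ j ∧ p i = 1 ∧ 2 ≤ p j)) {i : Fin k}
    (hpi : 2 ≤ p i) :
    ∃ c c' : Σ i, Fin (p i), c ≠ c' ∧ c.1 ≠ i ∧ c'.1 ≠ i := by
  obtain ⟨j, hj⟩ := Fintype.exists_ne_of_one_lt_card (by rw [Fintype.card_fin]; omega) i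
  by_cases hpj : 2 ≤ p j
  · exact ⟨⟨j, ⟨0, by omega⟩⟩, ⟨j, ⟨1, hpj⟩⟩, by simp, hj, hj⟩
  have hk3 : 3 ≤ k := by
    by_contra
    exact hns ⟨by omega, j, i, hj, by have := hp j; omega, hpi⟩
  obtain ⟨m, -, hm⟩ := Finset.exists_mem_notMem_of_card_lt_card (s := {i, j}) (t := .univ)
    (Finset.card_le_two.trans_lt (by rw [Finset.card_univ, Fintype.card_fin]; omega))
  simp only [Finset.mem_insert, Finset.mem_singleton, not_or] at hm
  exact ⟨⟨j, ⟨0, hp j⟩⟩, ⟨m, ⟨0, hp m⟩⟩, by simp [Ne.symm hm.2], hj, hm.1⟩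

lemma eq_univ_of_isMEGSet (hk : 2 ≤ k) (hp : ∀ i, 1 ≤ p i)
    (hns : ¬(k = 2 ∧ ∃ i j : Fin k, i ≠ j ∧ p i = 1 ∧ 2 ≤ p j))
    {S : Set (Σ i, Fin (p i))}
    (hS : IsMEGSet (completeMultipartiteGraph fun i => Fin (p i)) S) : S = Set.univ := by
  refine Set.eq_univ_of_forall fun u => mem_of_isMEGSet (exists_fst_ne hk hp) hS ?_
  intro x y hxy hne
  obtain ⟨c, c', hcc', hc, hc'⟩ :=
    exists_pair_fst_ne_of_not_star hk hp hns (two_le_of_fst_eq hxy hne)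
  by_cases hcu : c = u
  · exact ⟨c', by rintro rfl; exact hcc' hcu, hc'⟩
  · exact ⟨c, hcu, hc⟩

end FinParts

end completeMultipartiteGraph

theorem completeMultipartite_MEG (k : ℕ) (p : Fin k → ℕ) (hk : 2 ≤ k)
    (hp : ∀ i, 1 ≤ p i) :
    (¬ (k = 2 ∧ ∃ i j : Fin k, i ≠ j ∧ p i = 1 ∧ 2 ≤ p j) →
      megNum (completeMultipartiteGraph fun i => Fin (p i)) = ∑ i, p i) ∧
    ((k = 2 ∧ ∃ i j : Fin k, i ≠ j ∧ p i = 1 ∧ 2 ≤ p j) →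
      megNum (completeMultipartiteGraph fun i => Fin (p i)) = (∑ i, p i) - 1) := by
  refine ⟨fun hns => ?_, fun ⟨hk2, i, j, hij, hpi, hpj⟩ => ?_⟩
  · rw [megNum_eq_ncard (isMEGSet_univ _)
        fun T hT => (completeMultipartiteGraph.eq_univ_of_isMEGSet hk hp hns hT).ge,
      Set.ncard_univ]
    simp
  · subst hk2
    have : Subsingleton (Fin (p i)) := Fin.subsingleton_iff_le_one.mpr hpi.le
    have : Nonempty (Fin (p i)) := ⟨⟨0, hp i⟩⟩
    have : Nontrivial (Fin (p j)) := Fin.nontrivial_iff_two_le.mpr hpj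
    have hparts : ∀ m, m = i ∨ m = j := by omega
    rw [megNum_eq_ncard (completeMultipartiteGraph.isMEGSet_fiber_of_two_parts hij hparts)
        fun T => completeMultipartiteGraph.fiber_subset_of_isMEGSet hij,
      completeMultipartiteGraph.ncard_fiber,
      Fintype.sum_eq_add i j hij fun m hm => absurd (hparts m) (by tauto), hpi]
    simp
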